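/- For every irrational x ∈ (0,1), the series Σ_{j≥0} (−1)^{j−1} β_{j−1}(x) F(α_j(x)) converges absolutely, and there is an absolute constant C such that |Σ_{j>0} (−1)^{j−1} β_{j−1}(x) F(α_j(x))| ≤ C x for all x ∈ (0,1), assuming F is bounded on (0,1). -/

import Mathlib

/-- The Gauss map `α(x) = {1/x}`. -/
noncomputable def gaussMap (x : ℝ) : ℝ := Int.fract x⁻¹

/-- Iterates of the Gauss map. -/
noncomputable def gaussIter (k : ℕ) (x : ℝ) : ℝ := gaussMap^[k] x

/-- `β_{j-1}(x) = α_0(x) ⋯ α_{j-1}(x)`, so `betaProd 0 x = β_{-1}(x) = 1`. -/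
noncomputable def betaProd (j : ℕ) (x : ℝ) : ℝ :=
  ∏ i ∈ Finset.range j, gaussIter i x

/-! On `(0,1)` the Gauss map satisfies `α(y) < 1` and `y α(y) ≤ 1/2`, so along the orbit of an
irrational `x` the product `β_n(x)` is at most `x 2^{-⌊n/2⌋}`. With `|F| ≤ M` every term of the
series is dominated by `M x 2^{-⌊n/2⌋}`, whose sum is `4 M x`. -/

open Set

lemma gaussIter_succ (k : ℕ) (x : ℝ) : gaussIter (k + 1) x = gaussMap (gaussIter k x) :=
  Function.iterate_succ_apply' gaussMap k x

lemma gaussMap_nonneg (y : ℝ) : 0 ≤ gaussMap y := Int.fract_nonneg _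

lemma gaussMap_lt_one (y : ℝ) : gaussMap y < 1 := Int.fract_lt_one _

lemma irrational_gaussMap {y : ℝ} (hy : Irrational y) : Irrational (gaussMap y) := by
  simpa only [gaussMap, Int.fract] using hy.inv.sub_intCast _

lemma gaussMap_pos_of_irrational {y : ℝ} (hy : Irrational y) : 0 < gaussMap y :=
  (gaussMap_nonneg y).lt_of_ne fun h => (irrational_gaussMap hy).ne_rat 0 (by simp [← h])

lemma irrational_gaussIter {x : ℝ} (hx : Irrational x) (k : ℕ) : Irrational (gaussIter k x) := by
  induction k with
  | zero => exact hx
  | succ k ih => rw [gaussIter_succ]; exact irrational_gaussMap ih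

lemma mul_gaussMap_le_half {y : ℝ} (hy : y ∈ Ioo (0 : ℝ) 1) : y * gaussMap y ≤ 2⁻¹ := by
  obtain ⟨hy0, hy1⟩ := hy
  rcases le_or_gt y 2⁻¹ with hle | hgt
  · nlinarith [gaussMap_nonneg y, gaussMap_lt_one y]
  · -- here `1 < 1/y < 2`, so `gaussMap y = 1/y - 1` and `y * gaussMap y = 1 - y`
    have hfloor : ⌊y⁻¹⌋ = 1 := by
      rw [Int.floor_eq_iff, Int.cast_one, le_inv_comm₀ one_pos hy0, inv_lt_iff_one_lt_mul₀ hy0]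
      constructor <;> linarith
    have hα : gaussMap y = y⁻¹ - 1 := by
      rw [gaussMap, Int.fract, hfloor, Int.cast_one]
    rw [hα, mul_sub, mul_inv_cancel₀ hy0.ne']
    linarith

lemma betaProd_succ (j : ℕ) (x : ℝ) : betaProd (j + 1) x = betaProd j x * gaussIter j x :=
  Finset.prod_range_succ _ _

lemma betaProd_nonneg {x : ℝ} (hx : 0 ≤ x) (j : ℕ) : 0 ≤ betaProd j x := by
  refine Finset.prod_nonneg fun i _ => ?_
  cases i with
  | zero => exact hx
  | succ i => rw [gaussIter_succ]; exact gaussMap_nonneg _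

lemma gaussIter_mem_Ioo {x : ℝ} (hx : x ∈ Ioo (0 : ℝ) 1) (hirr : Irrational x) (k : ℕ) :
    gaussIter k x ∈ Ioo (0 : ℝ) 1 := by
  cases k with
  | zero => exact hx
  | succ k =>
    rw [gaussIter_succ]
    exact ⟨gaussMap_pos_of_irrational (irrational_gaussIter hirr k), gaussMap_lt_one _⟩

lemma betaProd_succ_le {x : ℝ} (hx : x ∈ Ioo (0 : ℝ) 1) (hirr : Irrational x) (n : ℕ) :
    betaProd (n + 1) x ≤ x * 2⁻¹ ^ (n / 2) := by
  induction n using Nat.twoStepInduction with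
  | zero => simp [betaProd, gaussIter]
  | one =>
    calc betaProd 2 x = x * gaussIter 1 x := by simp [betaProd, Finset.prod_range_succ, gaussIter]
      _ ≤ x * 1 := mul_le_mul_of_nonneg_left (gaussIter_mem_Ioo hx hirr 1).2.le hx.1.le
      _ = x * 2⁻¹ ^ (1 / 2) := by norm_num
  | more n ih _ =>
    have hpair : gaussIter (n + 1) x * gaussIter (n + 2) x ≤ 2⁻¹ := by
      rw [gaussIter_succ (n + 1)]
      exact mul_gaussMap_le_half (gaussIter_mem_Ioo hx hirr (n + 1))
    calc betaProd (n + 3) x = betaProd (n + 1) x * (gaussIter (n + 1) x * gaussIter (n + 2) x) := by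
          rw [betaProd_succ, betaProd_succ, mul_assoc]
      _ ≤ x * 2⁻¹ ^ (n / 2) * 2⁻¹ :=
          mul_le_mul ih hpair (mul_nonneg (gaussIter_mem_Ioo hx hirr _).1.le
            (gaussIter_mem_Ioo hx hirr _).1.le) (mul_nonneg hx.1.le (by positivity))
      _ = x * 2⁻¹ ^ ((n + 2) / 2) := by
          rw [show (n + 2) / 2 = n / 2 + 1 by omega, pow_succ, mul_assoc]

lemma hasSum_pow_div_two {r : ℝ} (h₀ : 0 ≤ r) (h₁ : r < 1) :
    HasSum (fun n : ℕ => r ^ (n / 2)) (2 * (1 - r)⁻¹) := by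
  rw [two_mul]
  refine HasSum.even_add_odd ?_ ?_ <;>
    simpa [Nat.mul_add_div two_pos] using hasSum_geometric_of_lt_one h₀ h₁

lemma abs_mul_betaProd_mul_le {F : ℝ → ℝ} {M x : ℝ} (hM : ∀ y ∈ Ioo (0 : ℝ) 1, |F y| ≤ M)
    (hx : x ∈ Ioo (0 : ℝ) 1) (hirr : Irrational x) (n k : ℕ) :
    |(-1 : ℝ) ^ k * betaProd (n + 1) x * F (gaussIter (n + 1) x)| ≤ M * x * 2⁻¹ ^ (n / 2) := by
  have hβ := betaProd_nonneg hx.1.le (n + 1)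
  rw [abs_mul, abs_mul, abs_pow, abs_neg, abs_one, one_pow, one_mul, abs_of_nonneg hβ]
  calc betaProd (n + 1) x * |F (gaussIter (n + 1) x)| ≤ x * 2⁻¹ ^ (n / 2) * M :=
        mul_le_mul (betaProd_succ_le hx hirr n) (hM _ (gaussIter_mem_Ioo hx hirr _)) (abs_nonneg _)
          (mul_nonneg hx.1.le (by positivity))
    _ = M * x * 2⁻¹ ^ (n / 2) := by ring

/-- If `F` is bounded on `(0,1)`, then for every irrational `x ∈ (0,1)` the series
`Σ_{j≥0} (-1)^{j-1} β_{j-1}(x) F(α_j(x))` converges absolutely, and there is a constant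
`C` such that `|Σ_{j>0} (-1)^{j-1} β_{j-1}(x) F(α_j(x))| ≤ C x`. -/
theorem series_betaProd_F_bound (F : ℝ → ℝ)
    (hF : ∃ M : ℝ, ∀ x ∈ Set.Ioo (0:ℝ) 1, |F x| ≤ M) :
    ∃ C : ℝ, ∀ x ∈ Set.Ioo (0:ℝ) 1, Irrational x →
      Summable (fun j : ℕ => |(-1 : ℝ) ^ (j - 1) * betaProd j x * F (gaussIter j x)|) ∧
      |∑' n : ℕ, (-1 : ℝ) ^ n * betaProd (n + 1) x * F (gaussIter (n + 1) x)| ≤ C * x := by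
  obtain ⟨M, hM⟩ := hF
  refine ⟨4 * M, fun x hx hirr => ?_⟩
  have hdom : HasSum (fun n : ℕ => M * x * 2⁻¹ ^ (n / 2)) (4 * M * x) := by
    have h := (hasSum_pow_div_two (r := (2 : ℝ)⁻¹) (by norm_num) (by norm_num)).mul_left (M * x)
    rwa [show M * x * (2 * (1 - 2⁻¹)⁻¹) = 4 * M * x by ring] at h
  refine ⟨(summable_nat_add_iff 1).mp ?_, ?_⟩
  · exact Summable.of_nonneg_of_le (fun _ => abs_nonneg _)
      (fun n => abs_mul_betaProd_mul_le hM hx hirr n _) hdom.summable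
  · rw [← Real.norm_eq_abs]
    exact tsum_of_norm_bounded hdom fun n =>
      (Real.norm_eq_abs _).trans_le (abs_mul_betaProd_mul_le hM hx hirr n n)
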